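/- arXiv:2507.10707 — 5 statements merged into one kernel-verified Lean document; each statement's English description precedes it below -/
import Mathlib

section
/- Suppose p(t) ≤ p(1)^{2-t} for every t ∈ ℕ. Then for all n ≥ 1, k ∈ ℝ and every charge sequence ω, the partition function satisfies Z_{n,k}(ω) ≤ p(1) e^{k+ω_n} ∏_{a=1}^{n-1} [1/p(1) + e^{k+ω_a} p(1)]. Consequently f(k) ≤ 𝔼[log(1/p(1) + e^{k+ω_0} p(1))]. -/
/-!
Split `Z_{n,k}` according to the renewal set `B ⊆ [1, n]`, which must contain `n`: the term of `B`
is `∏_{a ∈ B} e^{k+ω_a}` times the probability that the renewal set is exactly `B`. That probability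
is a product of inter-arrival probabilities whose gaps sum to `n`, so the domination hypothesis
bounds it by `p(1)^{2|B| - n}`, and the resulting sum over `B` is the expansion of
`p(1) e^{k+ω_n} ∏_{a<n} (1/p(1) + e^{k+ω_a} p(1))`. After taking logarithms the charges enter
additively, so averaging over the i.i.d. mean-zero disorder and dividing by `n` bounds `f(k)`.
-/

open MeasureTheory ProbabilityTheory Filter Finset Topology

lemma sum_filter_le_tsub_of_monotone {m : ℕ} {v : ℕ → ℕ} (hv : Monotone v) (j : Fin m) :
    ∑ i ∈ univ.filter (· ≤ j), (v (i + 1) - v i) = v (j + 1) - v 0 := by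
  rw [filter_ge_eq_Iic, ← sum_range_tsub hv, Nat.range_succ_eq_Iic, ← Fin.map_valEmbedding_Iic,
    sum_map]
  rfl

lemma exists_gaps_of_subset_Icc {n : ℕ} {B : Finset ℕ} (hB : B ⊆ Icc 1 n) (hnB : n ∈ B) :
    ∃ t : Fin #B → ℕ, (∀ i, 1 ≤ t i) ∧ ∑ i, t i = n ∧
      ∀ a, a ∈ B ↔ ∃ j : Fin #B, a = ∑ i ∈ univ.filter (· ≤ j), t i := by
  have hm : 0 < #B := card_pos.2 ⟨n, hnB⟩
  set e := B.orderEmbOfFin rfl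
  -- `v (j + 1)` is the `j`-th point of `B` (clamped past the end) and `v 0 = 0`
  let v : ℕ → ℕ := fun i => if i = 0 then 0 else e ⟨min (i - 1) (#B - 1), by omega⟩
  have hv : Monotone v := by
    intro i i' h
    simp only [v]
    split_ifs
    exacts [le_rfl, Nat.zero_le _, by omega, e.monotone (Fin.mk_le_mk.2 (by omega))]
  have hv_succ (j : Fin #B) : v (j + 1) = e j := by
    simp only [v, Nat.add_sub_cancel, if_neg (Nat.succ_ne_zero _)]
    congr
    omega
  have hpartial (j : Fin #B) : ∑ i ∈ univ.filter (· ≤ j), (v (i + 1) - v i) = e j := by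
    rw [sum_filter_le_tsub_of_monotone hv, hv_succ]
    rfl
  refine ⟨fun i => v (i + 1) - v i, fun i => ?_, ?_, fun a => ?_⟩
  · rcases i with ⟨_ | i, hi⟩
    · have := (mem_Icc.1 (hB (B.orderEmbOfFin_mem rfl ⟨0, hi⟩))).1
      simp only [v, if_pos rfl, hv_succ ⟨0, hi⟩]
      omega
    · have hlt : e ⟨i, by omega⟩ < e ⟨i + 1, hi⟩ := e.strictMono (Fin.mk_lt_mk.2 (by omega))
      have h₁ := hv_succ ⟨i, by omega⟩
      have h₂ := hv_succ ⟨i + 1, hi⟩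
      dsimp only at h₁ h₂ ⊢
      omega
  · have hlast : univ.filter (· ≤ (⟨#B - 1, by omega⟩ : Fin #B)) = univ := by
      ext i; simp [Fin.le_def]; omega
    rw [← hlast, hpartial, orderEmbOfFin_last rfl hm]
    exact le_antisymm (mem_Icc.1 (hB (max'_mem _ _))).2 (le_max' _ _ hnB)
  · rw [← mem_coe, ← range_orderEmbOfFin B rfl]
    simp only [hpartial, Set.mem_range, eq_comm, e]

lemma prod_zpow_eq_zpow_sum {K ι : Type*} [Field K] {x : K} (hx : x ≠ 0) (s : Finset ι)
    (f : ι → ℤ) :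
    ∏ i ∈ s, x ^ f i = x ^ (∑ i ∈ s, f i) := by
  induction s using Finset.cons_induction with
  | empty => simp
  | cons a s ha ih => rw [prod_cons, sum_cons, zpow_add₀ hx, ih]

lemma sum_powerset_prod_mul_zpow {K ι : Type*} [Field K] [DecidableEq ι] {x : K} (hx : x ≠ 0)
    (s : Finset ι) (c : ι → K) :
    ∑ A ∈ s.powerset, (∏ a ∈ A, c a) * x ^ (2 * (#A : ℤ) - #s) = ∏ a ∈ s, (x⁻¹ + c a * x) := by
  simp_rw [add_comm x⁻¹, prod_add, prod_mul_distrib, prod_const]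
  refine sum_congr rfl fun A hA => ?_
  rw [card_sdiff_of_subset (mem_powerset.1 hA), ← zpow_natCast, ← zpow_natCast, inv_zpow',
    mul_assoc, ← zpow_add₀ hx, Nat.cast_sub (card_le_card (mem_powerset.1 hA))]
  ring_nf

lemma sum_powerset_Icc_ite_mul_zpow {K : Type*} [Field K] {x : K} (hx : x ≠ 0) (c : ℕ → K)
    {n : ℕ} (hn : 1 ≤ n) :
    ∑ B ∈ (Icc 1 n).powerset, (if n ∈ B then ∏ a ∈ B, c a else 0) * x ^ (2 * (#B : ℤ) - n) =
      x * c n * ∏ a ∈ Icc 1 (n - 1), (x⁻¹ + c a * x) := by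
  obtain ⟨m, rfl⟩ : ∃ m, n = m + 1 := ⟨n - 1, by omega⟩
  have hm : m + 1 ∉ Icc 1 m := by simp
  rw [← insert_Icc_right_eq_Icc_add_one (by omega), sum_powerset_insert hm, Nat.add_sub_cancel,
    ← sum_powerset_prod_mul_zpow hx, mul_sum]
  refine (add_eq_right.2 (sum_eq_zero fun A hA => ?_)).trans (sum_congr rfl fun A hA => ?_)
  · rw [if_neg fun h => hm (mem_powerset.1 hA h), zero_mul]
  · have hA' : m + 1 ∉ A := fun h => hm (mem_powerset.1 hA h)
    rw [if_pos (mem_insert_self _ _), prod_insert hA', card_insert_of_notMem hA',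
      Nat.card_Icc, Nat.add_sub_cancel]
    have : 2 * ((#A + 1 : ℕ) : ℤ) - (m + 1 : ℕ) = 1 + (2 * #A - m) := by push_cast; ring
    rw [this, zpow_add₀ hx, zpow_one]
    ring

def HasRenewalLaw {S : Type*} [MeasurableSpace S] (P : Measure S) (X : ℕ → S → ℝ) (p : ℕ → ℝ) :
    Prop :=
  ∀ (n : ℕ) (t : Fin n → ℕ), (∀ i, 1 ≤ t i) →
    (P {s | ∀ a : ℕ, 1 ≤ a → a ≤ ∑ i, t i →
        (X a s = 1 ↔ ∃ j : Fin n, a = ∑ i ∈ Finset.univ.filter (· ≤ j), t i)}).toReal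
      = ∏ i, p (t i)

section RenewalEvent

variable {S : Type*} {X : ℕ → S → ℝ}

def renewalEvent (X : ℕ → S → ℝ) (n : ℕ) (B : Finset ℕ) : Set S :=
  {s | ∀ a ∈ Icc 1 n, X a s = if a ∈ B then 1 else 0}

lemma measurableSet_renewalEvent [MeasurableSpace S] (hXmeas : ∀ a, Measurable (X a)) (n : ℕ)
    (B : Finset ℕ) :
    MeasurableSet (renewalEvent X n B) := by
  have : renewalEvent X n B = ⋂ a ∈ Icc 1 n, X a ⁻¹' {if a ∈ B then 1 else 0} := by
    ext s; simp [renewalEvent]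
  rw [this]
  exact .biInter (Set.to_countable _) fun a _ => hXmeas a (measurableSet_singleton _)

lemma mem_renewalEvent_iff (hX01 : ∀ a s, X a s = 0 ∨ X a s = 1) {n : ℕ} {B : Finset ℕ}
    (hB : B ⊆ Icc 1 n) (s : S) :
    s ∈ renewalEvent X n B ↔ B = (Icc 1 n).filter (X · s = 1) := by
  simp only [renewalEvent, Finset.ext_iff, mem_filter]
  refine ⟨fun h a => ?_, fun h a ha => ?_⟩
  · by_cases ha : a ∈ Icc 1 n
    · rw [h a ha]; split_ifs <;> simp [*]
    · exact iff_of_false (fun haB => ha (hB haB)) (fun h' => ha h'.1)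
  · rcases hX01 a s with h0 | h1
    · simp [h a, ha, h0]
    · simp [h a, ha, h1]

lemma measure_renewalEvent [MeasurableSpace S] {P : Measure S} {p : ℕ → ℝ}
    (hX01 : ∀ a s, X a s = 0 ∨ X a s = 1) (hrenew : HasRenewalLaw P X p)
    {n : ℕ} {B : Finset ℕ} (hB : B ⊆ Icc 1 n) (hnB : n ∈ B) :
    ∃ t : Fin #B → ℕ, (∀ i, 1 ≤ t i) ∧ ∑ i, t i = n ∧
      (P (renewalEvent X n B)).toReal = ∏ i, p (t i) := by
  obtain ⟨t, ht, htsum, hmem⟩ := exists_gaps_of_subset_Icc hB hnB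
  refine ⟨t, ht, htsum, ?_⟩
  rw [← hrenew _ t ht, htsum]
  congr 2
  ext s
  simp only [renewalEvent, mem_Icc, ← hmem, and_imp]
  refine forall_congr' fun a => imp_congr_right fun _ => imp_congr_right fun _ => ?_
  rcases hX01 a s with h | h <;> split_ifs <;> simp_all

lemma sum_powerset_mul_indicator_renewalEvent (hX01 : ∀ a s, X a s = 0 ∨ X a s = 1) (n : ℕ)
    (g : Finset ℕ → ℝ) (s : S) :
    ∑ B ∈ (Icc 1 n).powerset, g B * (renewalEvent X n B).indicator 1 s =
      g ((Icc 1 n).filter (X · s = 1)) := by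
  rw [sum_eq_single_of_mem _ (mem_powerset.2 (filter_subset (X · s = 1) _))]
  · rw [Set.indicator_of_mem ((mem_renewalEvent_iff hX01 (filter_subset _ _) s).2 rfl),
      Pi.one_apply, mul_one]
  · intro B hB hne
    have hs : s ∉ renewalEvent X n B := fun hs =>
      hne ((mem_renewalEvent_iff hX01 (mem_powerset.1 hB) s).1 hs)
    rw [Set.indicator_of_notMem hs, mul_zero]

lemma exp_sum_mul_eq_ite (hX01 : ∀ a s, X a s = 0 ∨ X a s = 1) (w : ℕ → ℝ) {n : ℕ}
    (hn : 1 ≤ n) (s : S) :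
    Real.exp (∑ a ∈ Icc 1 n, w a * X a s) * X n s =
      if n ∈ (Icc 1 n).filter (X · s = 1) then ∏ a ∈ (Icc 1 n).filter (X · s = 1), Real.exp (w a)
      else 0 := by
  have hterm (a : ℕ) : w a * X a s = if X a s = 1 then w a else 0 := by
    rcases hX01 a s with h | h <;> simp [h]
  rw [sum_congr rfl fun a _ => hterm a, ← sum_filter, Real.exp_sum]
  rcases hX01 n s with h | h <;> simp [h, hn]

end RenewalEvent

section PartitionFunction

variable {S : Type*} [MeasurableSpace S] {P : Measure S} {X : ℕ → S → ℝ} {p : ℕ → ℝ}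

lemma integral_exp_sum_mul_eq (hXmeas : ∀ a, Measurable (X a))
    (hX01 : ∀ a s, X a s = 0 ∨ X a s = 1) [IsFiniteMeasure P] (w : ℕ → ℝ) {n : ℕ} (hn : 1 ≤ n) :
    ∫ s, Real.exp (∑ a ∈ Icc 1 n, w a * X a s) * X n s ∂P =
      ∑ B ∈ (Icc 1 n).powerset,
        (if n ∈ B then ∏ a ∈ B, Real.exp (w a) else 0) * (P (renewalEvent X n B)).toReal := by
  simp_rw [exp_sum_mul_eq_ite hX01 w hn, ← sum_powerset_mul_indicator_renewalEvent hX01 n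
    (fun B => if n ∈ B then ∏ a ∈ B, Real.exp (w a) else 0)]
  rw [integral_finsetSum _ fun B _ =>
    ((integrable_const 1).indicator (measurableSet_renewalEvent hXmeas n B)).const_mul _]
  refine sum_congr rfl fun B _ => ?_
  rw [integral_const_mul, integral_indicator_one (measurableSet_renewalEvent hXmeas n B),
    measureReal_def]

lemma toReal_measure_renewalEvent_le (hX01 : ∀ a s, X a s = 0 ∨ X a s = 1)
    (hrenew : HasRenewalLaw P X p) (hp : ∀ t, 0 < p t)
    (hpdom : ∀ t : ℕ, 1 ≤ t → p t ≤ p 1 ^ ((2 : ℤ) - (t : ℤ)))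
    {n : ℕ} {B : Finset ℕ} (hB : B ⊆ Icc 1 n) (hnB : n ∈ B) :
    (P (renewalEvent X n B)).toReal ≤ p 1 ^ (2 * (#B : ℤ) - n) := by
  obtain ⟨t, ht, htsum, hP⟩ := measure_renewalEvent hX01 hrenew hB hnB
  calc (P (renewalEvent X n B)).toReal = ∏ i, p (t i) := hP
    _ ≤ ∏ i, p 1 ^ ((2 : ℤ) - t i) :=
      prod_le_prod (fun i _ => (hp _).le) fun i _ => hpdom (t i) (ht i)
    _ = p 1 ^ (2 * (#B : ℤ) - n) := by
      rw [prod_zpow_eq_zpow_sum (hp 1).ne', sum_sub_distrib, ← htsum]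
      simp [mul_comm]

lemma toReal_measure_renewalEvent_pos (hX01 : ∀ a s, X a s = 0 ∨ X a s = 1)
    (hrenew : HasRenewalLaw P X p) (hp : ∀ t, 0 < p t)
    {n : ℕ} {B : Finset ℕ} (hB : B ⊆ Icc 1 n) (hnB : n ∈ B) :
    0 < (P (renewalEvent X n B)).toReal := by
  obtain ⟨t, -, -, hP⟩ := measure_renewalEvent hX01 hrenew hB hnB
  exact hP ▸ prod_pos fun i _ => hp (t i)

lemma integral_exp_sum_mul_le (hXmeas : ∀ a, Measurable (X a))
    (hX01 : ∀ a s, X a s = 0 ∨ X a s = 1) [IsFiniteMeasure P]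
    (hrenew : HasRenewalLaw P X p) (hp : ∀ t, 0 < p t)
    (hpdom : ∀ t : ℕ, 1 ≤ t → p t ≤ p 1 ^ ((2 : ℤ) - (t : ℤ))) (w : ℕ → ℝ) {n : ℕ}
    (hn : 1 ≤ n) :
    ∫ s, Real.exp (∑ a ∈ Icc 1 n, w a * X a s) * X n s ∂P ≤
      p 1 * Real.exp (w n) * ∏ a ∈ Icc 1 (n - 1), (1 / p 1 + Real.exp (w a) * p 1) := by
  rw [integral_exp_sum_mul_eq hXmeas hX01 w hn, one_div,
    ← sum_powerset_Icc_ite_mul_zpow (hp 1).ne' (fun a => Real.exp (w a)) hn]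
  refine sum_le_sum fun B hB => ?_
  split_ifs with hnB
  · exact mul_le_mul_of_nonneg_left
      (toReal_measure_renewalEvent_le hX01 hrenew hp hpdom (mem_powerset.1 hB) hnB)
      (prod_nonneg fun a _ => (Real.exp_pos _).le)
  · simp

lemma integral_exp_sum_mul_pos (hXmeas : ∀ a, Measurable (X a))
    (hX01 : ∀ a s, X a s = 0 ∨ X a s = 1) [IsFiniteMeasure P]
    (hrenew : HasRenewalLaw P X p) (hp : ∀ t, 0 < p t) (w : ℕ → ℝ) {n : ℕ} (hn : 1 ≤ n) :
    0 < ∫ s, Real.exp (∑ a ∈ Icc 1 n, w a * X a s) * X n s ∂P := by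
  have hn' : n ∈ Icc 1 n := mem_Icc.2 ⟨hn, le_rfl⟩
  rw [integral_exp_sum_mul_eq hXmeas hX01 w hn]
  refine sum_pos' (fun B _ => mul_nonneg ?_ ENNReal.toReal_nonneg)
    ⟨{n}, mem_powerset.2 (singleton_subset_iff.2 hn'), ?_⟩
  · split_ifs
    exacts [prod_nonneg fun a _ => (Real.exp_pos _).le, le_rfl]
  · rw [if_pos (mem_singleton_self n)]
    exact mul_pos (prod_pos fun a _ => Real.exp_pos _) (toReal_measure_renewalEvent_pos hX01
      hrenew hp (singleton_subset_iff.2 hn') (mem_singleton_self n))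

end PartitionFunction

lemma log_le_of_le_mul_exp_mul_prod {z c y : ℝ} {s : Finset ℕ} {g : ℕ → ℝ} (hz : 0 < z)
    (hc : 0 < c) (hg : ∀ a ∈ s, 0 < g a) (h : z ≤ c * Real.exp y * ∏ a ∈ s, g a) :
    Real.log z ≤ Real.log c + y + ∑ a ∈ s, Real.log (g a) := by
  calc Real.log z ≤ Real.log (c * Real.exp y * ∏ a ∈ s, g a) := Real.log_le_log hz h
    _ = Real.log c + y + ∑ a ∈ s, Real.log (g a) := by
      rw [Real.log_mul (by positivity) (prod_pos hg).ne', Real.log_mul hc.ne' (by positivity),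
        Real.log_exp, Real.log_prod fun a ha => (hg a ha).ne']

lemma le_of_tendsto_div_of_le_add_mul {u : ℕ → ℝ} {C I L : ℝ}
    (hu : ∀ᶠ n : ℕ in atTop, u n ≤ C + n * I) (h : Tendsto (fun n => u n / n) atTop (𝓝 L)) :
    L ≤ I := by
  have hlim : Tendsto (fun n : ℕ => I + C * (1 / (n : ℝ))) atTop (𝓝 I) := by
    simpa using tendsto_const_nhds.add (tendsto_one_div_atTop_nhds_zero_nat.const_mul C)
  refine le_of_tendsto_of_tendsto h hlim ?_
  filter_upwards [hu, eventually_gt_atTop 0] with n hn hpos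
  rw [div_le_iff₀ (by positivity)]
  field_simp
  linarith

section IdentCoordinates

variable {μ : Measure (ℕ → ℝ)}

lemma identDistrib_eval
    (hident : ∀ a : ℕ, μ.map (fun ω : ℕ → ℝ => ω a) = μ.map (fun ω : ℕ → ℝ => ω 0)) (a : ℕ) :
    IdentDistrib (fun ω : ℕ → ℝ => ω a) (fun ω => ω 0) μ μ :=
  ⟨(measurable_pi_apply a).aemeasurable, (measurable_pi_apply 0).aemeasurable, hident a⟩

lemma integral_le_add_card_mul_of_le [IsProbabilityMeasure μ]
    (hident : ∀ a : ℕ, μ.map (fun ω : ℕ → ℝ => ω a) = μ.map (fun ω : ℕ → ℝ => ω 0))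
    (hint : ∀ a : ℕ, Integrable (fun ω : ℕ → ℝ => ω a) μ) (hmean : ∀ a : ℕ, ∫ ω, ω a ∂μ = 0)
    {φ : ℝ → ℝ} (hφ : Measurable φ) (hφint : Integrable (fun ω : ℕ → ℝ => φ (ω 0)) μ)
    {F : (ℕ → ℝ) → ℝ} (hFint : Integrable F μ) (C : ℝ) (n : ℕ) (s : Finset ℕ)
    (hF : ∀ ω, F ω ≤ C + ω n + ∑ a ∈ s, φ (ω a)) :
    ∫ ω, F ω ∂μ ≤ C + #s * ∫ ω, φ (ω 0) ∂μ := by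
  have hφ_ident (a : ℕ) : IdentDistrib (fun ω : ℕ → ℝ => φ (ω a)) (fun ω => φ (ω 0)) μ μ :=
    (identDistrib_eval hident a).comp hφ
  have hφint' (a : ℕ) : Integrable (fun ω : ℕ → ℝ => φ (ω a)) μ :=
    (hφ_ident a).integrable_iff.2 hφint
  have hconst_add : Integrable (fun ω : ℕ → ℝ => C + ω n) μ := (integrable_const C).add (hint n)
  have hsum : Integrable (fun ω : ℕ → ℝ => ∑ a ∈ s, φ (ω a)) μ :=
    integrable_finsetSum s fun a _ => hφint' a
  calc ∫ ω, F ω ∂μ ≤ ∫ ω, (C + ω n + ∑ a ∈ s, φ (ω a)) ∂μ :=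
        integral_mono hFint (hconst_add.add hsum) hF
    _ = C + #s * ∫ ω, φ (ω 0) ∂μ := by
      rw [integral_add hconst_add hsum, integral_add (integrable_const C) (hint n),
        integral_finsetSum s fun a _ => hφint' a, integral_const, hmean,
        sum_congr rfl fun a _ => (hφ_ident a).integral_eq, sum_const, nsmul_eq_mul]
      simp

end IdentCoordinates

theorem stmt_2_general
    {S : Type*} [MeasurableSpace S] (P : Measure S) [IsProbabilityMeasure P]
    (X : ℕ → S → ℝ) (hXmeas : ∀ a, Measurable (X a))
    (hX01 : ∀ a s, X a s = 0 ∨ X a s = 1)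
    -- the inter-arrival law and its exponential domination
    (p : ℕ → ℝ) (hp : ∀ t, 0 < p t)
    (hpdom : ∀ t : ℕ, 1 ≤ t → p t ≤ p 1 ^ ((2 : ℤ) - (t : ℤ)))
    (hrenew : ∀ (n : ℕ) (t : Fin n → ℕ), (∀ i, 1 ≤ t i) →
      (P {s | ∀ a : ℕ, 1 ≤ a → a ≤ ∑ i, t i →
          (X a s = 1 ↔ ∃ j : Fin n, a = ∑ i ∈ Finset.univ.filter (· ≤ j), t i)}).toReal
        = ∏ i, p (t i))
    (Z : ℕ → ℝ → (ℕ → ℝ) → ℝ)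
    (hZ : ∀ n k ω, Z n k ω =
      ∫ s, Real.exp (∑ a ∈ Finset.Icc 1 n, (k + ω a) * X a s) * X n s ∂P)
    -- the disorder: i.i.d. charges with mean zero
    (μc : Measure (ℕ → ℝ)) [IsProbabilityMeasure μc]
    (hident : ∀ a : ℕ, Measure.map (fun ω : ℕ → ℝ => ω a) μc =
      Measure.map (fun ω : ℕ → ℝ => ω 0) μc)
    (hωint : ∀ a : ℕ, Integrable (fun ω : ℕ → ℝ => ω a) μc)
    (hmean : ∀ a : ℕ, ∫ ω : ℕ → ℝ, ω a ∂μc = 0)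
    (hlogint : ∀ k : ℝ,
      Integrable (fun ω : ℕ → ℝ => Real.log (1 / p 1 + Real.exp (k + ω 0) * p 1)) μc)
    (hZint : ∀ n k, Integrable (fun ω : ℕ → ℝ => Real.log (Z n k ω)) μc)
    -- the free energy
    (f : ℝ → ℝ)
    (hf : ∀ k, Tendsto (fun n : ℕ => (∫ ω, Real.log (Z n k ω) ∂μc) / n)
      atTop (nhds (f k))) :
    (∀ (n : ℕ), 1 ≤ n → ∀ (k : ℝ) (ω : ℕ → ℝ),
      Z n k ω ≤ p 1 * Real.exp (k + ω n) *
        ∏ a ∈ Finset.Icc 1 (n - 1), (1 / p 1 + Real.exp (k + ω a) * p 1)) ∧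
    (∀ k : ℝ, f k ≤ ∫ ω : ℕ → ℝ, Real.log (1 / p 1 + Real.exp (k + ω 0) * p 1) ∂μc) := by
  have hZ_pos (n : ℕ) (hn : 1 ≤ n) (k : ℝ) (ω : ℕ → ℝ) : 0 < Z n k ω :=
    hZ n k ω ▸ integral_exp_sum_mul_pos hXmeas hX01 hrenew hp (fun a => k + ω a) hn
  have hZ_le (n : ℕ) (hn : 1 ≤ n) (k : ℝ) (ω : ℕ → ℝ) :=
    hZ n k ω ▸ integral_exp_sum_mul_le hXmeas hX01 hrenew hp hpdom (fun a => k + ω a) hn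
  refine ⟨hZ_le, fun k => ?_⟩
  set I := ∫ ω : ℕ → ℝ, Real.log (1 / p 1 + Real.exp (k + ω 0) * p 1) ∂μc
  refine le_of_tendsto_div_of_le_add_mul (C := Real.log (p 1) + k - I) ?_ (hf k)
  filter_upwards [eventually_ge_atTop 1] with n hn
  have hp1 := hp 1
  have hlog_le (ω : ℕ → ℝ) : Real.log (Z n k ω) ≤ Real.log (p 1) + k + ω n +
      ∑ a ∈ Icc 1 (n - 1), Real.log (1 / p 1 + Real.exp (k + ω a) * p 1) :=
    (log_le_of_le_mul_exp_mul_prod (hZ_pos n hn k ω) hp1 (fun a _ => by positivity)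
      (hZ_le n hn k ω)).trans_eq (by ring)
  have hintegral_le := integral_le_add_card_mul_of_le hident hωint hmean
    (φ := fun x => Real.log (1 / p 1 + Real.exp (k + x) * p 1)) (by fun_prop) (hlogint k)
    (hZint n k) _ n _ hlog_le
  rw [Nat.card_Icc, Nat.add_sub_cancel, Nat.cast_pred hn] at hintegral_le
  linarith

/-- If `p(t) ≤ p(1)^{2-t}` then
`Z_{n,k}(ω) ≤ p(1) e^{k+ω_n} ∏_{a=1}^{n-1} [1/p(1) + e^{k+ω_a} p(1)]`; consequently
`f(k) ≤ E[log(1/p(1) + e^{k+ω_0} p(1))]`. -/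
theorem stmt_2
    {S : Type*} [MeasurableSpace S] (P : Measure S) [IsProbabilityMeasure P]
    (X : ℕ → S → ℝ) (hXmeas : ∀ a, Measurable (X a))
    (hX01 : ∀ a s, X a s = 0 ∨ X a s = 1) (hX0 : ∀ s, X 0 s = 1)
    -- the inter-arrival law and its exponential domination
    (p : ℕ → ℝ) (hp : ∀ t, 0 < p t)
    (hpdom : ∀ t : ℕ, 1 ≤ t → p t ≤ p 1 ^ ((2 : ℤ) - (t : ℤ)))
    (hgap : ∀ n : ℕ, 1 ≤ n →
      (P {s | (∀ a ∈ Finset.Icc 1 (n - 1), X a s = 0) ∧ X n s = 1}).toReal = p n)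
    (hrenew : ∀ (n : ℕ) (t : Fin n → ℕ), (∀ i, 1 ≤ t i) →
      (P {s | ∀ a : ℕ, 1 ≤ a → a ≤ ∑ i, t i →
          (X a s = 1 ↔ ∃ j : Fin n, a = ∑ i ∈ Finset.univ.filter (· ≤ j), t i)}).toReal
        = ∏ i, p (t i))
    (Z : ℕ → ℝ → (ℕ → ℝ) → ℝ)
    (hZ : ∀ n k ω, Z n k ω =
      ∫ s, Real.exp (∑ a ∈ Finset.Icc 1 n, (k + ω a) * X a s) * X n s ∂P)
    -- the disorder: i.i.d. charges with mean zero
    (μc : Measure (ℕ → ℝ)) [IsProbabilityMeasure μc]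
    (hident : ∀ a : ℕ, Measure.map (fun ω : ℕ → ℝ => ω a) μc =
      Measure.map (fun ω : ℕ → ℝ => ω 0) μc)
    (hωint : ∀ a : ℕ, Integrable (fun ω : ℕ → ℝ => ω a) μc)
    (hmean : ∀ a : ℕ, ∫ ω : ℕ → ℝ, ω a ∂μc = 0)
    (hlogint : ∀ k : ℝ,
      Integrable (fun ω : ℕ → ℝ => Real.log (1 / p 1 + Real.exp (k + ω 0) * p 1)) μc)
    (hZint : ∀ n k, Integrable (fun ω : ℕ → ℝ => Real.log (Z n k ω)) μc)
    -- the free energy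
    (f : ℝ → ℝ)
    (hf : ∀ k, Tendsto (fun n : ℕ => (∫ ω, Real.log (Z n k ω) ∂μc) / n)
      atTop (nhds (f k))) :
    (∀ (n : ℕ), 1 ≤ n → ∀ (k : ℝ) (ω : ℕ → ℝ),
      Z n k ω ≤ p 1 * Real.exp (k + ω n) *
        ∏ a ∈ Finset.Icc 1 (n - 1), (1 / p 1 + Real.exp (k + ω a) * p 1)) ∧
    (∀ k : ℝ, f k ≤ ∫ ω : ℕ → ℝ, Real.log (1 / p 1 + Real.exp (k + ω 0) * p 1) ∂μc) :=
  stmt_2_general P X hXmeas hX01 p hp hpdom hrenew Z hZ μc hident hωint hmean hlogint hZint f hf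
end

section
/- Let f : ℝ → ℝ be convex with f = 0 on (−∞, h_c], differentiable and strictly convex on (h_c, ∞), with derivative ρ := f' mapping (h_c, ∞) bijectively onto (ρ_c, 1) where ρ_c = lim_{h↓h_c} ρ(h), and let ι_ρ : (ρ_c,1) → (h_c,∞) denote its inverse. Then the Legendre transform I_h(r) = sup_k { r(k−h) − f(k) + f(h) } satisfies: I_h(r) = r(h_c − h) + f(h) for r ∈ [0, ρ_c], and I_h(r) = r[ι_ρ(r) − h] − f(ι_ρ(r)) + f(h) for r ∈ (ρ_c, 1). -/
open Filter Set

/-- Tangent line of a convex function lies below its graph. -/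
lemma tangent_le {f : ℝ → ℝ} {c m : ℝ} (hconv : ConvexOn ℝ Set.univ f)
    (hd : HasDerivAt f c m) (k : ℝ) : f m + c * (k - m) ≤ f k := by
  rcases lt_trichotomy k m with hkm | rfl | hmk
  · have hs : slope f k m ≤ c :=
      hconv.slope_le_of_hasDerivAt (mem_univ k) (mem_univ m) hkm hd
    rw [slope_def_field] at hs
    have hpos : (0:ℝ) < m - k := by linarith
    rw [div_le_iff₀ hpos] at hs
    nlinarith
  · simp
  · have hs : c ≤ slope f m k :=
      hconv.le_slope_of_hasDerivAt (mem_univ m) (mem_univ k) hmk hd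
    rw [slope_def_field] at hs
    have hpos : (0:ℝ) < k - m := by linarith
    rw [le_div_iff₀ hpos] at hs
    nlinarith

/-- Explicit formula for the rate function `I_h`: it is affine on `[0, ρ_c]` and given
through the inverse `ι` of the contact density `ρ = f'` on `(ρ_c, 1)`. -/
theorem stmt_5 (hc ρc : ℝ) (f ρ ι : ℝ → ℝ)
    (hconv : ConvexOn ℝ Set.univ f) (hzero : ∀ k ≤ hc, f k = 0)
    (hderiv : ∀ k ∈ Set.Ioi hc, HasDerivAt f (ρ k) k)
    (hstrict : StrictConvexOn ℝ (Set.Ioi hc) f)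
    (hbij : Set.BijOn ρ (Set.Ioi hc) (Set.Ioo ρc 1))
    (hinv : Set.InvOn ι ρ (Set.Ioi hc) (Set.Ioo ρc 1))
    (hρc : Tendsto ρ (nhdsWithin hc (Set.Ioi hc)) (nhds ρc))
    (I : ℝ → ℝ → ℝ)
    (hI : ∀ h r, I h r = sSup (Set.range fun k => r * (k - h) - f k + f h)) :
    ∀ h : ℝ,
      (∀ r ∈ Set.Icc (0 : ℝ) ρc, I h r = r * (hc - h) + f h) ∧
      (∀ r ∈ Set.Ioo ρc (1 : ℝ), I h r = r * (ι r - h) - f (ι r) + f h) := by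
  have hfhc : f hc = 0 := hzero hc le_rfl
  -- key lower bound : f k ≥ ρc * (k - hc) for all k > hc
  have hkey : ∀ k > hc, ρc * (k - hc) ≤ f k := by
    intro k hk
    -- f m ≥ 0 for m > hc
    have hnn : ∀ m > hc, 0 ≤ f m := by
      intro m hm
      have := hconv.slope_mono_adjacent (mem_univ (hc - 1)) (mem_univ m)
        (by linarith : hc - 1 < hc) hm
      rw [hfhc, hzero (hc - 1) (by linarith)] at this
      have h1 : (0:ℝ) ≤ f m / (m - hc) := by
        have h2 : ((0:ℝ) - 0) / (hc - (hc - 1)) = 0 := by norm_num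
        rw [h2] at this
        simpa using this
      have hpos : (0:ℝ) < m - hc := by linarith
      have := (div_nonneg_iff.mp h1)
      rcases this with ⟨h2, _⟩ | ⟨_, h3⟩
      · exact h2
      · linarith
    -- f k ≥ ρ m * (k - m) for m in (hc, k), then take m → hc⁺
    have hbound : ∀ᶠ m in nhdsWithin hc (Set.Ioi hc), ρ m * (k - m) ≤ f k := by
      filter_upwards [self_mem_nhdsWithin] with m hm
      have := tangent_le hconv (hderiv m hm) k
      have := hnn m hm
      linarith
    have htend : Tendsto (fun m => ρ m * (k - m)) (nhdsWithin hc (Set.Ioi hc))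
        (nhds (ρc * (k - hc))) := by
      apply hρc.mul
      exact (tendsto_const_nhds.sub Filter.tendsto_id).mono_left nhdsWithin_le_nhds
    have hne : (nhdsWithin hc (Set.Ioi hc)).NeBot := nhdsGT_neBot hc
    exact le_of_tendsto htend hbound
  intro h
  constructor
  · -- affine part
    rintro r ⟨hr0, hrρc⟩
    rw [hI]
    have hgreat : IsGreatest (Set.range fun k => r * (k - h) - f k + f h)
        (r * (hc - h) + f h) := by
      constructor
      · exact ⟨hc, by show r * (hc - h) - f hc + f h = r * (hc - h) + f h; rw [hfhc]; ring⟩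
      · rintro y ⟨k, rfl⟩
        simp only
        -- need r * (k - h) - f k ≤ r * (hc - h), i.e. r * (k - hc) ≤ f k
        have : r * (k - hc) ≤ f k := by
          rcases le_or_gt k hc with hk | hk
          · rw [hzero k hk]
            have : k - hc ≤ 0 := by linarith
            exact mul_nonpos_of_nonneg_of_nonpos hr0 this
          · calc r * (k - hc) ≤ ρc * (k - hc) :=
                  mul_le_mul_of_nonneg_right hrρc (by linarith)
              _ ≤ f k := hkey k hk
        linarith [this]
    exact hgreat.csSup_eq
  · -- strictly convex part
    rintro r hr
    rw [hI]
    set m := ι r with hm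
    have hmem : m ∈ Set.Ioi hc := by
      obtain ⟨k, hk, hρk⟩ := hbij.surjOn hr
      have : ι r = k := by rw [← hρk]; exact hinv.1 hk
      rw [hm, this]; exact hk
    have hρm : ρ m = r := hinv.2 hr
    have hgreat : IsGreatest (Set.range fun k => r * (k - h) - f k + f h)
        (r * (m - h) - f m + f h) := ⟨⟨m, rfl⟩, by
      rintro y ⟨k, rfl⟩
      simp only
      have := tangent_le hconv (hderiv m hmem) k
      rw [hρm] at this
      linarith⟩
    exact hgreat.csSup_eq
end

section
/- For any n, h, ω, and site a ∈ {1,…,n}, let ᵃω denote ω with ω_a replaced by a constant m. Then log Z_{n,h}(ω) − log Z_{n,h}(ᵃω) = −log(1 − (1 − e^{m − ω_a}) E_{n,h,ω}[X_a]), and consequently log Z_{n,h}(ω) − log Z_{n,h}(ᵃω) ≥ (1 − e^{m − ω_a}) E_{n,h,ω}[X_a]. -/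
open MeasureTheory Finset

/-- Replacing the charge `ω_a` by `m` in the pinning partition function:
`log Z(ω) - log Z(ᵃω) = -log(1 - (1 - e^{m-ω_a}) E_{n,h,ω}[X_a])`, and hence
`log Z(ω) - log Z(ᵃω) ≥ (1 - e^{m-ω_a}) E_{n,h,ω}[X_a]`. -/
theorem stmt_9
    {S : Type*} [MeasurableSpace S] (P : Measure S) [IsProbabilityMeasure P]
    (X : ℕ → S → ℝ) (hXmeas : ∀ b, Measurable (X b))
    (hX01 : ∀ b s, X b s = 0 ∨ X b s = 1)
    (n a : ℕ) (ha : 1 ≤ a) (han : a ≤ n) (h m : ℝ) (ω : ℕ → ℝ)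
    (Z : (ℕ → ℝ) → ℝ)
    (hZ : ∀ ω' : ℕ → ℝ, Z ω' =
      ∫ s, Real.exp (∑ b ∈ Finset.Icc 1 n, (h + ω' b) * X b s) * X n s ∂P)
    (hZpos : ∀ ω' : ℕ → ℝ, 0 < Z ω')
    (EX : (ℕ → ℝ) → ℝ)
    (hEX : ∀ ω' : ℕ → ℝ, EX ω' =
      (∫ s, X a s * Real.exp (∑ b ∈ Finset.Icc 1 n, (h + ω' b) * X b s) * X n s ∂P) /
        Z ω') :
    Real.log (Z ω) - Real.log (Z (Function.update ω a m)) =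
      -Real.log (1 - (1 - Real.exp (m - ω a)) * EX ω) ∧
    (1 - Real.exp (m - ω a)) * EX ω ≤
      Real.log (Z ω) - Real.log (Z (Function.update ω a m)) := by
  set c : ℝ := m - ω a with hc
  set f : S → ℝ := fun s => Real.exp (∑ b ∈ Finset.Icc 1 n, (h + ω b) * X b s) * X n s
    with hf
  set g : S → ℝ := fun s =>
    X a s * Real.exp (∑ b ∈ Finset.Icc 1 n, (h + ω b) * X b s) * X n s with hg
  have ha' : a ∈ Finset.Icc 1 n := Finset.mem_Icc.mpr ⟨ha, han⟩
  -- bounds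
  set C : ℝ := Real.exp (∑ b ∈ Finset.Icc 1 n, |h + ω b|) with hC
  have hXabs : ∀ b s, |X b s| ≤ 1 := by
    intro b s; rcases hX01 b s with h0 | h0 <;> simp [h0]
  have hsumle : ∀ s, (∑ b ∈ Finset.Icc 1 n, (h + ω b) * X b s)
      ≤ ∑ b ∈ Finset.Icc 1 n, |h + ω b| := by
    intro s
    refine Finset.sum_le_sum fun b _ => ?_
    rcases hX01 b s with h0 | h1
    · simp [h0]
    · simp [h1, le_abs_self]
  have hSmeas : Measurable fun s => ∑ b ∈ Finset.Icc 1 n, (h + ω b) * X b s :=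
    Finset.measurable_sum _ fun b _ => (measurable_const.mul (hXmeas b))
  have hfmeas : Measurable f := (hSmeas.exp).mul (hXmeas n)
  have hgmeas : Measurable g := ((hXmeas a).mul hSmeas.exp).mul (hXmeas n)
  have hfint : Integrable f P := by
    refine (integrable_const C).mono' hfmeas.aestronglyMeasurable ?_
    filter_upwards with s
    have h1 : |f s| ≤ Real.exp (∑ b ∈ Finset.Icc 1 n, (h + ω b) * X b s) * 1 := by
      rw [hf, abs_mul, abs_of_pos (Real.exp_pos _)]
      exact mul_le_mul_of_nonneg_left (hXabs n s) (Real.exp_pos _).le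
    calc ‖f s‖ = |f s| := rfl
      _ ≤ _ * 1 := h1
      _ ≤ C := by rw [mul_one]; exact Real.exp_le_exp.mpr (hsumle s)
  have hgint : Integrable g P := by
    refine (integrable_const C).mono' hgmeas.aestronglyMeasurable ?_
    filter_upwards with s
    have h1 : |g s| ≤ 1 * Real.exp (∑ b ∈ Finset.Icc 1 n, (h + ω b) * X b s) * 1 := by
      rw [hg, abs_mul, abs_mul, abs_of_pos (Real.exp_pos _)]
      exact mul_le_mul (mul_le_mul_of_nonneg_right (hXabs a s) (Real.exp_pos _).le)
        (hXabs n s) (abs_nonneg _) (by positivity)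
    calc ‖g s‖ = |g s| := rfl
      _ ≤ 1 * _ * 1 := h1
      _ ≤ C := by rw [one_mul, mul_one]; exact Real.exp_le_exp.mpr (hsumle s)
  -- pointwise identity
  have hpt : ∀ s, Real.exp (∑ b ∈ Finset.Icc 1 n, (h + Function.update ω a m b) * X b s)
      * X n s = f s + (Real.exp c - 1) * g s := by
    intro s
    have hsum : (∑ b ∈ Finset.Icc 1 n, (h + Function.update ω a m b) * X b s)
        = (∑ b ∈ Finset.Icc 1 n, (h + ω b) * X b s) + c * X a s := by
      rw [← Finset.sum_erase_add _ _ ha', ← Finset.sum_erase_add _ _ ha']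
      have h1 : ∑ b ∈ (Finset.Icc 1 n).erase a, (h + Function.update ω a m b) * X b s
          = ∑ b ∈ (Finset.Icc 1 n).erase a, (h + ω b) * X b s :=
        Finset.sum_congr rfl fun b hb => by
          rw [Function.update_of_ne (Finset.ne_of_mem_erase hb)]
      rw [h1, Function.update_self, hc]; ring
    rw [hsum]
    rcases hX01 a s with h0 | h1
    · simp [hf, hg, h0]
    · simp only [hf, hg, h1, mul_one, Real.exp_add]; ring
  -- key multiplicative identity
  have hIg : ∫ s, g s ∂P = EX ω * Z ω := by
    have h2 := hEX ω
    rw [eq_div_iff (hZpos ω).ne'] at h2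
    simpa [hg] using h2.symm
  have key : Z (Function.update ω a m) = Z ω * (1 - (1 - Real.exp c) * EX ω) := by
    rw [hZ (Function.update ω a m)]
    calc (∫ s, Real.exp (∑ b ∈ Finset.Icc 1 n, (h + Function.update ω a m b) * X b s)
          * X n s ∂P)
        = ∫ s, f s + (Real.exp c - 1) * g s ∂P := integral_congr_ae (.of_forall hpt)
      _ = (∫ s, f s ∂P) + (Real.exp c - 1) * ∫ s, g s ∂P := by
          rw [integral_add hfint (hgint.const_mul _), integral_const_mul]
      _ = Z ω + (Real.exp c - 1) * (EX ω * Z ω) := by rw [← hZ ω, hIg]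
      _ = Z ω * (1 - (1 - Real.exp c) * EX ω) := by ring
  set t : ℝ := 1 - (1 - Real.exp c) * EX ω with htdef
  have ht : 0 < t := by
    have h1 := hZpos (Function.update ω a m)
    rw [key] at h1
    by_contra hle
    push_neg at hle
    nlinarith [hZpos ω]
  have hlog : Real.log (Z ω) - Real.log (Z (Function.update ω a m)) = -Real.log t := by
    rw [key, Real.log_mul (hZpos ω).ne' ht.ne']; ring
  refine ⟨hlog, ?_⟩
  have := Real.log_le_sub_one_of_pos ht
  rw [hlog]
  rw [htdef] at this ⊢
  linarith
end

section
/- Let L be a random variable on a probability space with law P, and let J ≥ 0 be another random variable with E[J] > 0. If |E[e^{izL} | 𝔊]| ≤ E[e^{−(z²/π²) J} | 𝔊] pointwise for a σ-algebra 𝔊 (or directly |E[e^{izL}]| ≤ E[e^{−(z²/π²)J}]), then |E[e^{izL}]| ≤ e^{−(z²/(2π²)) E[J]} + 4 Var[J]/E[J]². -/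
open MeasureTheory ProbabilityTheory Real

/-! Split `Ω` at the level `E[J]/2`: above it `e^{-cJ} ≤ e^{-c E[J]/2}`, below it
`e^{-cJ} ≤ 1`, and the lower set has probability at most `Var[J]/(E[J]/2)²` by Chebyshev. -/

section

variable {Ω : Type*} [MeasurableSpace Ω] {P : Measure Ω}

theorem integral_exp_neg_mul_le_add_measureReal [IsProbabilityMeasure P] {J : Ω → ℝ}
    (hJ : AEMeasurable J P) (hJ0 : 0 ≤ᵐ[P] J) {c : ℝ} (hc : 0 ≤ c) (t : ℝ) :
    ∫ ω, exp (-c * J ω) ∂P ≤ exp (-c * t) + P.real {ω | J ω ≤ t} := by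
  set A := {ω | J ω ≤ t}
  have hA : NullMeasurableSet A P := nullMeasurableSet_le hJ aemeasurable_const
  have hpt : ∀ ω, 0 ≤ J ω → exp (-c * J ω) ≤ exp (-c * t) + A.indicator (1 : Ω → ℝ) ω := by
    intro ω hω
    by_cases hωA : ω ∈ A
    · rw [Set.indicator_of_mem hωA, Pi.one_apply]
      have : exp (-c * J ω) ≤ 1 := exp_le_one_iff.mpr (by nlinarith)
      linarith [exp_pos (-c * t)]
    · rw [Set.indicator_of_notMem hωA, add_zero]
      exact exp_le_exp.mpr (by nlinarith [not_le.mp (show ¬ J ω ≤ t from hωA)])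
  have hint : Integrable (fun ω => exp (-c * J ω)) P := by
    refine Integrable.of_bound (by fun_prop) 1 (hJ0.mono fun ω hω => ?_)
    rw [norm_of_nonneg (exp_pos _).le]
    exact exp_le_one_iff.mpr (by nlinarith [show 0 ≤ J ω from hω])
  have hind : Integrable (A.indicator (1 : Ω → ℝ)) P := (integrable_const 1).indicator₀ hA
  calc ∫ ω, exp (-c * J ω) ∂P ≤ ∫ ω, (exp (-c * t) + A.indicator (1 : Ω → ℝ) ω) ∂P :=
        integral_mono_ae hint ((integrable_const _).add hind) (hJ0.mono hpt)
    _ = exp (-c * t) + P.real A := by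
        rw [integral_add (integrable_const _) hind, integral_const, integral_indicator₀ hA]
        simp

theorem measureReal_le_integral_sub_le_variance_div_sq [IsFiniteMeasure P] {J : Ω → ℝ}
    (hJ : MemLp J 2 P) {s : ℝ} (hs : 0 < s) :
    P.real {ω | J ω ≤ P[J] - s} ≤ variance J P / s ^ 2 := by
  have hsub : {ω | J ω ≤ P[J] - s} ⊆ {ω | s ≤ |J ω - P[J]|} := fun ω hω => by
    rw [Set.mem_ofPred_eq, abs_sub_comm]
    exact le_abs.mpr (Or.inl (by linarith [hω.out]))
  exact ENNReal.toReal_le_of_le_ofReal (div_nonneg (variance_nonneg _ _) (sq_nonneg _))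
    ((measure_mono hsub).trans (meas_ge_le_variance_div_sq hJ hs))

end

/-- If `|E[e^{izL}]| ≤ E[e^{-(z²/π²) J}]` for a nonnegative random variable `J`
with `E[J] > 0`, then `|E[e^{izL}]| ≤ e^{-(z²/(2π²)) E[J]} + 4 Var[J]/E[J]²`. -/
theorem stmt_13 {Ω : Type*} [MeasurableSpace Ω] (P : Measure Ω) [IsProbabilityMeasure P]
    (L J : Ω → ℝ) (hJ0 : ∀ ω, 0 ≤ J ω) (hJ2 : MemLp J 2 P)
    (hJpos : 0 < ∫ ω, J ω ∂P) (z : ℝ)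
    (hbound : ‖∫ ω, Complex.exp (Complex.I * (z : ℂ) * (L ω : ℂ)) ∂P‖ ≤
      ∫ ω, Real.exp (-(z ^ 2 / π ^ 2) * J ω) ∂P) :
    ‖∫ ω, Complex.exp (Complex.I * (z : ℂ) * (L ω : ℂ)) ∂P‖ ≤
      Real.exp (-(z ^ 2 / (2 * π ^ 2)) * ∫ ω, J ω ∂P) +
        4 * variance J P / (∫ ω, J ω ∂P) ^ 2 := by
  set m := ∫ ω, J ω ∂P
  have hexp : -(z ^ 2 / (2 * π ^ 2)) * m = -(z ^ 2 / π ^ 2) * (m / 2) := by ring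
  have hcheb : P.real {ω | J ω ≤ m / 2} ≤ 4 * variance J P / m ^ 2 := by
    have h := measureReal_le_integral_sub_le_variance_div_sq hJ2 (half_pos hJpos)
    rw [sub_half] at h
    convert h using 1
    field_simp
    ring
  calc _ ≤ _ := hbound
    _ ≤ exp (-(z ^ 2 / π ^ 2) * (m / 2)) + P.real {ω | J ω ≤ m / 2} :=
      integral_exp_neg_mul_le_add_measureReal hJ2.aestronglyMeasurable.aemeasurable
        (ae_of_all _ hJ0) (by positivity) _
    _ ≤ _ := by rw [hexp]; gcongr
end

section
/- For any real numbers z, ζ and λ > 0, the identity holds: e^{izζ} − e^{−z²/2} = iz ∫_{−λ}^{λ} e^{izu} [𝒩(u) − 1_{ζ ≤ u}] du + √(2/π) ∫_{λ}^{∞} [cos(zλ) − cos(zu)] e^{−u²/2} du + (e^{izζ} − e^{−izλ}) 1_{ζ ≤ −λ} + (e^{izζ} − e^{izλ}) 1_{ζ > λ}, where 𝒩(u) = (1/√(2π)) ∫_{−∞}^{u} e^{−t²/2} dt. -/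
/-!
Write `e(u) = e^{izu}` and `φ(u) = e^{-u²/2}`, so that `e' = iz e` and `𝒩' = φ / √(2π)`.
The indicator part integrates to `e(max λ ζ) - e(max (-λ) ζ)`, which is `e(λ) - e(ζ)` plus the
two boundary corrections. Integrating `iz e 𝒩` by parts leaves `∫_{-λ}^{λ} e φ`: the Fourier
transform `√(2π) e^{-z²/2}` of `φ` minus its two tails, which by the symmetry of `φ` combine
into `2 ∫_λ^∞ cos(zu) φ(u) du`; finally `𝒩(-λ) = 1 - 𝒩(λ) = ∫_λ^∞ φ / √(2π)`.
-/

open Real MeasureTheory intervalIntegral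
open Complex (I)
open Set (Iic Ioi)

namespace Esseen

noncomputable def gaussWeight (t : ℝ) : ℝ := Real.exp (-t ^ 2 / 2)

noncomputable def normalCDF (x : ℝ) : ℝ := (√(2 * π))⁻¹ * ∫ t in Iic x, gaussWeight t

noncomputable def expIMul (z u : ℝ) : ℂ := Complex.exp (I * z * u)

lemma gaussWeight_eq_exp_neg_mul_sq (t : ℝ) : gaussWeight t = Real.exp (-(1 / 2) * t ^ 2) := by
  rw [gaussWeight]; ring_nf

lemma gaussWeight_neg (t : ℝ) : gaussWeight (-t) = gaussWeight t := by
  simp [gaussWeight]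

@[fun_prop]
lemma continuous_gaussWeight : Continuous gaussWeight := by
  unfold gaussWeight; fun_prop

lemma integrable_gaussWeight : Integrable gaussWeight := by
  simpa only [← gaussWeight_eq_exp_neg_mul_sq] using
    integrable_exp_neg_mul_sq (show (0 : ℝ) < 1 / 2 by norm_num)

lemma integral_gaussWeight : ∫ t, gaussWeight t = √(2 * π) := by
  simp only [gaussWeight_eq_exp_neg_mul_sq, integral_gaussian]
  congr 1; field_simp

lemma integral_Iic_neg_gaussWeight (x : ℝ) :
    ∫ t in Iic (-x), gaussWeight t = ∫ t in Ioi x, gaussWeight t := by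
  simp only [← integral_comp_neg_Ioi, gaussWeight_neg]

lemma hasDerivAt_normalCDF (x : ℝ) :
    HasDerivAt normalCDF ((√(2 * π))⁻¹ * gaussWeight x) x := by
  have hIic (y : ℝ) : ∫ t in Iic y, gaussWeight t =
      (∫ t in Iic 0, gaussWeight t) + ∫ t in (0 : ℝ)..y, gaussWeight t := by
    rw [← integral_Iic_sub_Iic integrable_gaussWeight.integrableOn
      integrable_gaussWeight.integrableOn, add_sub_cancel]
  have hFTC : HasDerivAt (fun y => ∫ t in (0 : ℝ)..y, gaussWeight t) (gaussWeight x) x :=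
    integral_hasDerivAt_right integrable_gaussWeight.intervalIntegrable
      continuous_gaussWeight.aestronglyMeasurable.stronglyMeasurableAtFilter
      continuous_gaussWeight.continuousAt
  have hN : normalCDF = fun y => (√(2 * π))⁻¹ *
      ((∫ t in Iic 0, gaussWeight t) + ∫ t in (0 : ℝ)..y, gaussWeight t) :=
    funext fun y => by rw [normalCDF, hIic]
  rw [hN]
  exact (hFTC.const_add _).const_mul _

@[fun_prop]
lemma continuous_normalCDF : Continuous normalCDF :=
  continuous_iff_continuousAt.2 fun x => (hasDerivAt_normalCDF x).continuousAt

lemma normalCDF_eq_one_sub (x : ℝ) :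
    normalCDF x = 1 - (√(2 * π))⁻¹ * ∫ t in Ioi x, gaussWeight t := by
  have hs : √(2 * π) ≠ 0 := by positivity
  have htot := integral_Iic_add_Ioi (b := x)
    integrable_gaussWeight.integrableOn integrable_gaussWeight.integrableOn
  rw [integral_gaussWeight] at htot
  rw [normalCDF, eq_sub_iff_add_eq, ← mul_add, htot, inv_mul_cancel₀ hs]

lemma normalCDF_neg (x : ℝ) :
    normalCDF (-x) = (√(2 * π))⁻¹ * ∫ t in Ioi x, gaussWeight t := by
  rw [normalCDF, integral_Iic_neg_gaussWeight]

@[fun_prop]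
lemma continuous_expIMul (z : ℝ) : Continuous (expIMul z) := by
  unfold expIMul; fun_prop

lemma hasDerivAt_expIMul (z x : ℝ) : HasDerivAt (expIMul z) (I * z * expIMul z x) x :=
  ((hasDerivAt_id x).ofReal_comp.const_mul (I * z)).cexp.congr_deriv
    (by simp [expIMul, mul_comm])

lemma norm_expIMul (z u : ℝ) : ‖expIMul z u‖ = 1 := by
  simpa [expIMul, mul_assoc] using Complex.norm_exp_I_mul_ofReal (z * u)

lemma expIMul_neg (z u : ℝ) : expIMul z (-u) = Complex.exp (-(I * z * u)) := by
  simp [expIMul]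

lemma expIMul_add_expIMul_neg (z u : ℝ) :
    expIMul z u + expIMul z (-u) = 2 * Real.cos (z * u) := by
  simp only [expIMul, Complex.ofReal_neg, Complex.ofReal_cos, Complex.cos, Complex.ofReal_mul]
  ring_nf

lemma integral_expIMul_mul_gaussWeight (z : ℝ) :
    ∫ u, expIMul z u * gaussWeight u = √(2 * π) * gaussWeight z := by
  have h := fourierIntegral_gaussian (b := 1 / 2) (by norm_num) z
  have hs : ((π : ℂ) / (1 / 2)) ^ (1 / 2 : ℂ) = √(2 * π) := by
    rw [Real.sqrt_eq_rpow, Complex.ofReal_cpow (by positivity)]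
    push_cast; ring_nf
  simp only [expIMul, gaussWeight_eq_exp_neg_mul_sq, Complex.ofReal_exp] at h ⊢
  push_cast at h ⊢
  rw [h, hs]
  ring_nf

lemma integrable_expIMul_comp_mul_gaussWeight (z : ℝ) {s : ℝ → ℝ} (hs : Continuous s) :
    Integrable fun u => expIMul z (s u) * gaussWeight u :=
  integrable_gaussWeight.ofReal.bdd_mul ((continuous_expIMul z).comp hs).aestronglyMeasurable
    (ae_of_all _ fun u => (norm_expIMul z (s u)).le)

lemma integrable_cos_mul_gaussWeight (z : ℝ) :
    Integrable fun u => Real.cos (z * u) * gaussWeight u :=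
  integrable_gaussWeight.bdd_mul (by fun_prop) (ae_of_all _ fun u => Real.abs_cos_le_one _)

lemma integral_Ioi_expIMul_add_expIMul_neg_mul_gaussWeight (z lam : ℝ) :
    ∫ u in Ioi lam, (expIMul z u + expIMul z (-u)) * gaussWeight u =
      2 * ((∫ u in Ioi lam, Real.cos (z * u) * gaussWeight u : ℝ) : ℂ) := by
  rw [← integral_complex_ofReal, ← MeasureTheory.integral_const_mul]
  congr 1 with u
  rw [expIMul_add_expIMul_neg]
  push_cast
  ring

lemma integral_expIMul_mul_gaussWeight_symm (z lam : ℝ) :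
    ∫ u in (-lam)..lam, expIMul z u * gaussWeight u =
      √(2 * π) * gaussWeight z -
        2 * ((∫ u in Ioi lam, Real.cos (z * u) * gaussWeight u : ℝ) : ℂ) := by
  have hint := integrable_expIMul_comp_mul_gaussWeight z continuous_id'
  have hint_neg := integrable_expIMul_comp_mul_gaussWeight z continuous_neg
  have hleft : ∫ u in Iic (-lam), expIMul z u * gaussWeight u =
      ∫ u in Ioi lam, expIMul z (-u) * gaussWeight u := by
    simp only [← integral_comp_neg_Ioi, gaussWeight_neg]
  rw [← integral_Ioi_expIMul_add_expIMul_neg_mul_gaussWeight,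
    ← integral_expIMul_mul_gaussWeight,
    ← integral_Iic_sub_Iic hint.integrableOn hint.integrableOn, hleft,
    ← integral_Iic_add_Ioi (b := lam) hint.integrableOn hint.integrableOn]
  simp only [add_mul]
  rw [integral_add hint.integrableOn hint_neg.integrableOn]
  ring

section IteLe

variable {E : Type*} [NormedAddCommGroup E] {f : ℝ → E}

lemma intervalIntegrable_ite_le (hf : Continuous f) (ζ a b : ℝ) :
    IntervalIntegrable (fun u => if ζ ≤ u then f u else 0) volume a b := by
  have hind : (fun u => if ζ ≤ u then f u else 0) = (Set.Ici ζ).indicator f := by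
    ext u; simp [Set.indicator]
  rw [hind]
  exact ⟨(hf.intervalIntegrable a b).1.indicator measurableSet_Ici,
    (hf.intervalIntegrable a b).2.indicator measurableSet_Ici⟩

lemma integral_ite_le [NormedSpace ℝ E] (hf : Continuous f) (ζ a b : ℝ) :
    ∫ u in a..b, (if ζ ≤ u then f u else 0) = ∫ u in max a ζ..max b ζ, f u := by
  have hfrom (x : ℝ) :
      ∫ u in ζ..x, (if ζ ≤ u then f u else 0) = ∫ u in ζ..max x ζ, f u := by
    rcases le_total ζ x with hx | hx
    · rw [max_eq_left hx]
      refine integral_congr fun u hu => ?_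
      rw [Set.uIcc_of_le hx] at hu
      simp [hu.1]
    · rw [max_eq_right hx, integral_same, integral_symm, integral_of_le hx,
        integral_Ioc_eq_integral_Ioo, setIntegral_congr_fun measurableSet_Ioo
          (g := fun _ => (0 : E)) fun u hu => if_neg (not_le.2 hu.2)]
      simp
  rw [← integral_interval_sub_left (intervalIntegrable_ite_le hf ζ ζ b)
      (intervalIntegrable_ite_le hf ζ ζ a),
    ← integral_interval_sub_left (hf.intervalIntegrable ζ _) (hf.intervalIntegrable ζ _),
    hfrom, hfrom]

end IteLe

lemma apply_max_sub_apply_max_neg {M : Type*} [AddCommGroup M] (g : ℝ → M) (lam ζ : ℝ) :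
    g (max lam ζ) - g (max (-lam) ζ) =
      g lam - g ζ + (if ζ ≤ -lam then g ζ - g (-lam) else 0)
        + (if lam < ζ then g ζ - g lam else 0) := by
  by_cases h₁ : ζ ≤ -lam <;> by_cases h₂ : lam < ζ
  · rw [if_pos h₁, if_pos h₂, max_eq_right h₂.le, max_eq_left h₁]; abel
  · rw [if_pos h₁, if_neg h₂, max_eq_left (not_lt.1 h₂), max_eq_left h₁]; abel
  · rw [if_neg h₁, if_pos h₂, max_eq_right h₂.le, max_eq_right (not_le.1 h₁).le]; abel
  · rw [if_neg h₁, if_neg h₂, max_eq_left (not_lt.1 h₂), max_eq_right (not_le.1 h₁).le]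
    abel

lemma mul_integral_expIMul (z a b : ℝ) :
    I * z * ∫ u in a..b, expIMul z u = expIMul z b - expIMul z a := by
  rw [← intervalIntegral.integral_const_mul]
  exact integral_eq_sub_of_hasDerivAt (fun x _ => hasDerivAt_expIMul z x)
    ((continuous_const.mul (continuous_expIMul z)).intervalIntegrable a b)

lemma mul_integral_expIMul_mul_ite (z ζ a b : ℝ) :
    I * z * ∫ u in a..b, expIMul z u * (if ζ ≤ u then 1 else 0) =
      expIMul z (max b ζ) - expIMul z (max a ζ) := by
  simp only [mul_ite, mul_one, mul_zero]
  rw [integral_ite_le (continuous_expIMul z), mul_integral_expIMul]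

lemma mul_integral_expIMul_mul_normalCDF (z a b : ℝ) :
    I * z * ∫ u in a..b, expIMul z u * normalCDF u =
      normalCDF b * expIMul z b - normalCDF a * expIMul z a -
        (√(2 * π))⁻¹ * ∫ u in a..b, expIMul z u * gaussWeight u := by
  have hφ : Continuous fun x => (((√(2 * π))⁻¹ * gaussWeight x : ℝ) : ℂ) := by fun_prop
  have hIBP := integral_mul_deriv_eq_deriv_mul (a := a) (b := b)
    (fun x _ => (hasDerivAt_normalCDF x).ofReal_comp) (fun x _ => hasDerivAt_expIMul z x)
    (hφ.intervalIntegrable _ _)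
    ((continuous_const.mul (continuous_expIMul z)).intervalIntegrable _ _)
  calc I * z * ∫ u in a..b, expIMul z u * normalCDF u
      = ∫ u in a..b, (normalCDF u : ℂ) * (I * z * expIMul z u) := by
        rw [← intervalIntegral.integral_const_mul]; congr 1 with u; ring
    _ = _ := hIBP
    _ = _ := by
        rw [← intervalIntegral.integral_const_mul]; congr 2 with u; push_cast; ring

lemma mul_integral_expIMul_mul_normalCDF_symm (z lam : ℝ) :
    I * z * ∫ u in (-lam)..lam, expIMul z u * normalCDF u =
      expIMul z lam - gaussWeight z -
        ((√(2 / π) * ∫ u in Ioi lam, (Real.cos (z * lam) - Real.cos (z * u)) * gaussWeight u :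
          ℝ) : ℂ) := by
  set K := ∫ u in Ioi lam, gaussWeight u
  set J := ∫ u in Ioi lam, Real.cos (z * u) * gaussWeight u
  have hs : (√(2 * π) : ℂ) ≠ 0 := by norm_cast; positivity
  have htail : ∫ u in Ioi lam, (Real.cos (z * lam) - Real.cos (z * u)) * gaussWeight u =
      Real.cos (z * lam) * K - J := by
    simp only [sub_mul]
    rw [integral_sub (integrable_gaussWeight.integrableOn.const_mul _)
      (integrable_cos_mul_gaussWeight z).integrableOn, MeasureTheory.integral_const_mul]
  have hsqrt : √(2 / π) = 2 * (√(2 * π))⁻¹ := by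
    rw [eq_mul_inv_iff_mul_eq₀ (by positivity), ← Real.sqrt_mul (by positivity),
      show 2 / π * (2 * π) = 2 ^ 2 by field_simp, Real.sqrt_sq zero_le_two]
  have hE := expIMul_add_expIMul_neg z lam
  push_cast at hE
  rw [mul_integral_expIMul_mul_normalCDF, integral_expIMul_mul_gaussWeight_symm,
    normalCDF_eq_one_sub, normalCDF_neg, htail, hsqrt]
  push_cast
  linear_combination (-(√(2 * π) : ℂ)⁻¹ * K) * hE - gaussWeight z * mul_inv_cancel₀ hs

end Esseen

open Esseen

theorem stmt_15_general (z ζ lam : ℝ) :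
    Complex.exp (Complex.I * (z : ℂ) * (ζ : ℂ)) - (Real.exp (-z ^ 2 / 2) : ℂ) =
      Complex.I * (z : ℂ) *
        (∫ u in (-lam)..lam, Complex.exp (Complex.I * (z : ℂ) * (u : ℂ)) *
          ((((Real.sqrt (2 * π))⁻¹ * ∫ t in Set.Iic u, Real.exp (-t ^ 2 / 2) : ℝ) : ℂ) -
            (if ζ ≤ u then (1 : ℂ) else 0)))
      + ((Real.sqrt (2 / π) *
          ∫ u in Set.Ioi lam, (Real.cos (z * lam) - Real.cos (z * u)) *
            Real.exp (-u ^ 2 / 2) : ℝ) : ℂ)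
      + (if ζ ≤ -lam then
          Complex.exp (Complex.I * (z : ℂ) * (ζ : ℂ)) -
            Complex.exp (-(Complex.I * (z : ℂ) * (lam : ℂ))) else 0)
      + (if lam < ζ then
          Complex.exp (Complex.I * (z : ℂ) * (ζ : ℂ)) -
            Complex.exp (Complex.I * (z : ℂ) * (lam : ℂ)) else 0) := by
  simp only [← gaussWeight.eq_1, ← normalCDF.eq_1, ← expIMul.eq_1, ← expIMul_neg]
  have hN : IntervalIntegrable (fun u => expIMul z u * normalCDF u) volume (-lam) lam :=
    (by fun_prop : Continuous fun u => expIMul z u * normalCDF u).intervalIntegrable _ _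
  have hind : IntervalIntegrable (fun u => expIMul z u * if ζ ≤ u then 1 else 0)
      volume (-lam) lam := by
    simpa only [mul_ite, mul_one, mul_zero] using
      intervalIntegrable_ite_le (continuous_expIMul z) ζ (-lam) lam
  simp only [mul_sub]
  rw [integral_sub hN hind, mul_sub, mul_integral_expIMul_mul_normalCDF_symm,
    mul_integral_expIMul_mul_ite, apply_max_sub_apply_max_neg]
  ring

/-- Esseen-type identity: for real `z, ζ` and `λ > 0`,
`e^{izζ} - e^{-z²/2} = iz ∫_{-λ}^{λ} e^{izu}[𝒩(u) - 1_{ζ≤u}] du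
 + √(2/π) ∫_{λ}^{∞} [cos(zλ) - cos(zu)] e^{-u²/2} du
 + (e^{izζ} - e^{-izλ}) 1_{ζ≤-λ} + (e^{izζ} - e^{izλ}) 1_{ζ>λ}`,
where `𝒩` is the standard normal CDF. -/
theorem stmt_15 (z ζ lam : ℝ) (hlam : 0 < lam) :
    Complex.exp (Complex.I * (z : ℂ) * (ζ : ℂ)) - (Real.exp (-z ^ 2 / 2) : ℂ) =
      Complex.I * (z : ℂ) *
        (∫ u in (-lam)..lam, Complex.exp (Complex.I * (z : ℂ) * (u : ℂ)) *
          ((((Real.sqrt (2 * π))⁻¹ * ∫ t in Set.Iic u, Real.exp (-t ^ 2 / 2) : ℝ) : ℂ) -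
            (if ζ ≤ u then (1 : ℂ) else 0)))
      + ((Real.sqrt (2 / π) *
          ∫ u in Set.Ioi lam, (Real.cos (z * lam) - Real.cos (z * u)) *
            Real.exp (-u ^ 2 / 2) : ℝ) : ℂ)
      + (if ζ ≤ -lam then
          Complex.exp (Complex.I * (z : ℂ) * (ζ : ℂ)) -
            Complex.exp (-(Complex.I * (z : ℂ) * (lam : ℂ))) else 0)
      + (if lam < ζ then
          Complex.exp (Complex.I * (z : ℂ) * (ζ : ℂ)) -
            Complex.exp (Complex.I * (z : ℂ) * (lam : ℂ)) else 0) :=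
  stmt_15_general z ζ lam
end
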